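/- Let X₁, …, X_s be i.i.d. random vectors in ℝ^p satisfying the sub-Gaussian vector condition with constant L > 0, and let Σ* = E[X₁X₁ᵀ]. Then for every χ > 0, with δ_s(χ) = 2L²((2·log p + χ)/s + √((4·log p + 2χ)/s)), one has P(max_{k,l} |(1/s)·Σ_{i=1}^s X_{i,k}X_{i,l} − Σ*_{kl}| ≥ δ_s(χ)) ≤ 2e^{−χ}. -/

import Mathlib

/-!
Polarization, `2 x_k x_l = ((x_k + x_l)/√2)² - ((x_k - x_l)/√2)²`, bounds the deviation of an
off-diagonal entry of the empirical covariance by the deviations of the empirical second moments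
`∑ᵢ (aᵀXᵢ)²` along two unit vectors `a` (one suffices on the diagonal). The summands `(aᵀXᵢ)²` are
nonnegative with `E exp ((aᵀXᵢ)² / L²) ≤ 2`, and `e^{θx} - 1 - θx ≤ θ² (eˣ - 1 - x)` for `x ≥ 0`,
`θ ≤ 1` turns this into `E exp (t Z) ≤ exp (t E Z + (t L²)²)` for every `t ≤ 1/L²`, of either sign.
A Chernoff bound with the best `0 ≤ t ≤ 1/L²` gives the Bernstein tail
`2 exp (-min (ε² / (4 s L⁴)) (ε / (2 L²)))` for each direction. At `ε = s δ_s(χ)` the exponent is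
at least `2 log p + χ + log 2` once `χ > log 2` (for smaller `χ` the bound exceeds `1`), so the
union bound over the `p²` entries, each costing at most `4` one-sided tails, gives `2 e^{-χ}`.
-/

open MeasureTheory ProbabilityTheory Real

lemma mul_exp_mul_sub_one_le_sq_mul {θ y : ℝ} (hθ : θ ≤ 1) :
    θ * (exp (θ * y) - 1) ≤ θ ^ 2 * (exp y - 1) := by
  rcases le_or_gt 0 θ with hθ₀ | hθ₀
  · have hconv : exp (θ * y) ≤ θ * exp y + (1 - θ) := by
      simpa using convexOn_exp.2 (Set.mem_univ y) (Set.mem_univ 0) hθ₀ (by linarith)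
        (by ring : θ + (1 - θ) = 1)
    nlinarith
  · have h₁ := add_one_le_exp (θ * y)
    have h₂ := add_one_le_exp y
    nlinarith

lemma exp_mul_sub_one_sub_mul_le_sq_mul {θ x : ℝ} (hθ : θ ≤ 1) (hx : 0 ≤ x) :
    exp (θ * x) - 1 - θ * x ≤ θ ^ 2 * (exp x - 1 - x) := by
  set g : ℝ → ℝ := fun y => θ ^ 2 * (exp y - 1 - y) - (exp (θ * y) - 1 - θ * y)
  have hg : ∀ y, HasDerivAt g (θ ^ 2 * (exp y - 1) - θ * (exp (θ * y) - 1)) y := by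
    intro y
    have hθy : HasDerivAt (fun y => θ * y) θ y := by simpa using (hasDerivAt_id y).const_mul θ
    exact (((((hasDerivAt_exp y).sub_const 1).sub (hasDerivAt_id y)).const_mul (θ ^ 2)).sub
      ((((hasDerivAt_exp (θ * y)).comp y hθy).sub_const 1).sub hθy)).congr_deriv (by ring)
  have hmono : Monotone g := monotone_of_hasDerivAt_nonneg hg
    fun y => sub_nonneg.2 (mul_exp_mul_sub_one_le_sq_mul hθ)
  have := hmono hx
  simp only [g, mul_zero, exp_zero] at this
  linarith

noncomputable def bernsteinRate (n K ε : ℝ) : ℝ :=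
  min (ε ^ 2 / (4 * n * K ^ 2)) (ε / (2 * K))

lemma exists_mul_sq_sub_mul_le_neg_bernsteinRate {n K ε : ℝ} (hn : 0 < n) (hK : 0 < K)
    (hε : 0 ≤ ε) : ∃ t, 0 ≤ t ∧ t * K ≤ 1 ∧ n * (t * K) ^ 2 - t * ε ≤ -bernsteinRate n K ε := by
  rcases le_or_gt ε (2 * n * K) with hεn | hεn
  · refine ⟨ε / (2 * n * K ^ 2), by positivity, ?_, ?_⟩
    · rw [div_mul_eq_mul_div, div_le_one (by positivity)]
      nlinarith
    · refine le_trans (le_of_eq ?_) (neg_le_neg (min_le_left _ _))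
      field_simp
      ring
  · refine ⟨1 / K, by positivity, by field_simp; rfl, ?_⟩
    refine le_trans ?_ (neg_le_neg (min_le_right _ _))
    rw [one_div_mul_cancel hK.ne', div_mul_eq_mul_div, le_neg, div_le_iff₀ (by positivity)]
    field_simp
    nlinarith

lemma add_log_two_le_bernsteinRate {n K u : ℝ} (hn : 1 ≤ n) (hK : 0 < K) (hu : log 2 ≤ u) :
    u + log 2 ≤ bernsteinRate n K (n * (2 * K * (u / n + √(2 * u / n)))) := by
  set r := √(2 * u / n)
  have hu₀ : 0 ≤ u := (log_pos one_lt_two).le.trans hu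
  have hr₀ : 0 ≤ r := sqrt_nonneg _
  have hr : n * r ^ 2 = 2 * u := by
    rw [sq_sqrt (by positivity)]
    field_simp
  have hnr : log 2 ≤ n * r := by
    nlinarith [log_two_lt_d9, mul_nonneg (zero_le_one.trans hn) hr₀]
  have hε : n * (2 * K * (u / n + r)) = 2 * K * (u + n * r) := by
    field_simp
  rw [bernsteinRate, hε]
  refine le_min ?_ ?_
  · rw [le_div_iff₀ (by positivity)]
    have h : (u + log 2) * n ≤ (u + n * r) ^ 2 := by
      nlinarith [mul_nonneg hu₀ (mul_nonneg (zero_le_one.trans hn) hr₀)]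
    nlinarith [mul_le_mul_of_nonneg_left h (by positivity : (0 : ℝ) ≤ 4 * K ^ 2)]
  · rw [le_div_iff₀ (by positivity)]
    nlinarith

section SubExponential

variable {Ω : Type*} [MeasurableSpace Ω] {μ : Measure Ω} {Z : Ω → ℝ} {K : ℝ}

lemma integrable_exp_div_of_lintegral_le (hZ : Measurable Z)
    (hZK : ∫⁻ ω, ENNReal.ofReal (exp (Z ω / K)) ∂μ ≤ 2) :
    Integrable (fun ω => exp (Z ω / K)) μ := by
  refine ⟨(hZ.div_const K).exp.aestronglyMeasurable, ?_⟩
  rw [hasFiniteIntegral_iff_ofReal (ae_of_all _ fun ω => (exp_pos _).le)]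
  exact hZK.trans_lt ENNReal.ofNat_lt_top

lemma integral_exp_div_le_of_lintegral_le (hZ : Measurable Z)
    (hZK : ∫⁻ ω, ENNReal.ofReal (exp (Z ω / K)) ∂μ ≤ 2) :
    ∫ ω, exp (Z ω / K) ∂μ ≤ 2 := by
  rw [integral_eq_lintegral_of_nonneg_ae (ae_of_all _ fun ω => (exp_pos _).le)
    (hZ.div_const K).exp.aestronglyMeasurable]
  exact ENNReal.toReal_le_of_le_ofReal zero_le_two (by simpa using hZK)

lemma integrable_of_lintegral_exp_div_le (hZ : Measurable Z) (hZ₀ : 0 ≤ Z) (hK : 0 < K)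
    (hZK : ∫⁻ ω, ENNReal.ofReal (exp (Z ω / K)) ∂μ ≤ 2) :
    Integrable Z μ := by
  refine ((integrable_exp_div_of_lintegral_le hZ hZK).const_mul K).mono'
    hZ.aestronglyMeasurable (ae_of_all _ fun ω => ?_)
  rw [norm_of_nonneg (hZ₀ ω), ← div_le_iff₀' hK]
  linarith [add_one_le_exp (Z ω / K)]

lemma integrable_exp_mul_of_lintegral_le [IsFiniteMeasure μ] (hZ : Measurable Z) (hZ₀ : 0 ≤ Z)
    (hK : 0 < K) (hZK : ∫⁻ ω, ENNReal.ofReal (exp (Z ω / K)) ∂μ ≤ 2) {t : ℝ} (ht : t * K ≤ 1) :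
    Integrable (fun ω => exp (t * Z ω)) μ := by
  refine ((integrable_exp_div_of_lintegral_le hZ hZK).add (integrable_const 1)).mono'
    (hZ.const_mul t).exp.aestronglyMeasurable (ae_of_all _ fun ω => ?_)
  rw [norm_of_nonneg (exp_pos _).le, Pi.add_apply]
  rcases le_or_gt t 0 with ht₀ | ht₀
  · have : exp (t * Z ω) ≤ 1 := exp_le_one_iff.2 (mul_nonpos_of_nonpos_of_nonneg ht₀ (hZ₀ ω))
    linarith [exp_pos (Z ω / K)]
  · have : t * Z ω ≤ Z ω / K := by
      rw [le_div_iff₀ hK]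
      nlinarith [mul_le_mul_of_nonneg_right ht (hZ₀ ω)]
    linarith [exp_le_exp.2 this]

variable [IsProbabilityMeasure μ]

lemma mgf_le_exp_mul_integral_add_sq (hZ : Measurable Z) (hZ₀ : 0 ≤ Z) (hK : 0 < K)
    (hZK : ∫⁻ ω, ENNReal.ofReal (exp (Z ω / K)) ∂μ ≤ 2) {t : ℝ} (ht : t * K ≤ 1) :
    mgf Z μ t ≤ exp (t * ∫ ω, Z ω ∂μ + (t * K) ^ 2) := by
  have hexp := integrable_exp_div_of_lintegral_le hZ hZK
  have hZint := integrable_of_lintegral_exp_div_le hZ hZ₀ hK hZK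
  have hpoint : ∀ ω,
      exp (t * Z ω) ≤ 1 + t * Z ω + (t * K) ^ 2 * (exp (Z ω / K) - 1 - Z ω / K) := by
    intro ω
    have := exp_mul_sub_one_sub_mul_le_sq_mul ht (div_nonneg (hZ₀ ω) hK.le)
    rw [mul_assoc, mul_div_cancel₀ _ hK.ne'] at this
    linarith
  have hintegral : ∫ ω, (1 + t * Z ω + (t * K) ^ 2 * (exp (Z ω / K) - 1 - Z ω / K)) ∂μ
      = 1 + t * ∫ ω, Z ω ∂μ + (t * K) ^ 2 * (∫ ω, exp (Z ω / K) ∂μ - 1 - (∫ ω, Z ω ∂μ) / K) := by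
    rw [integral_add, integral_add, integral_const_mul, integral_const_mul, integral_sub,
      integral_sub, integral_div]
    · simp
    all_goals fun_prop
  have hbracket : ∫ ω, exp (Z ω / K) ∂μ - 1 - (∫ ω, Z ω ∂μ) / K ≤ 1 := by
    have := div_nonneg (integral_nonneg (μ := μ) hZ₀) hK.le
    linarith [integral_exp_div_le_of_lintegral_le hZ hZK]
  calc mgf Z μ t
      ≤ ∫ ω, (1 + t * Z ω + (t * K) ^ 2 * (exp (Z ω / K) - 1 - Z ω / K)) ∂μ :=
        integral_mono (integrable_exp_mul_of_lintegral_le hZ hZ₀ hK hZK ht) (by fun_prop) hpoint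
    _ ≤ 1 + (t * ∫ ω, Z ω ∂μ + (t * K) ^ 2) := by
        rw [hintegral]
        linarith [mul_le_of_le_one_right (sq_nonneg (t * K)) hbracket]
    _ ≤ exp (t * ∫ ω, Z ω ∂μ + (t * K) ^ 2) := by
        linarith [add_one_le_exp (t * ∫ ω, Z ω ∂μ + (t * K) ^ 2)]

variable {ι : Type*} [Fintype ι]

lemma measureReal_sum_sub_integral_ge_le_of_mgf_le {Y : ι → Ω → ℝ} (hY : ∀ i, Measurable (Y i))
    (hind : iIndepFun Y μ) {c t : ℝ} (ht : 0 ≤ t)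
    (hint : ∀ i, Integrable (fun ω => exp (t * Y i ω)) μ)
    (hmgf : ∀ i, mgf (Y i) μ t ≤ exp (t * ∫ ω, Y i ω ∂μ + c)) (ε : ℝ) :
    μ.real {ω | ε ≤ ∑ i, (Y i ω - ∫ ω', Y i ω' ∂μ)} ≤ exp (Fintype.card ι * c - t * ε) := by
  set M := ∑ i, ∫ ω, Y i ω ∂μ
  have hevent : {ω | ε ≤ ∑ i, (Y i ω - ∫ ω', Y i ω' ∂μ)} = {ω | ε + M ≤ (∑ i, Y i) ω} := by
    ext ω
    simp only [Set.mem_ofPred_eq, Finset.sum_sub_distrib, Finset.sum_apply, M]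
    constructor <;> intro h <;> linarith
  have hmgf_sum : mgf (∑ i, Y i) μ t ≤ exp (t * M + Fintype.card ι * c) := by
    rw [hind.mgf_sum hY, Finset.mul_sum, ← Finset.card_univ, ← nsmul_eq_mul,
      ← Finset.sum_const, ← Finset.sum_add_distrib, exp_sum]
    exact Finset.prod_le_prod (fun i _ => mgf_nonneg) fun i _ => hmgf i
  calc μ.real {ω | ε ≤ ∑ i, (Y i ω - ∫ ω', Y i ω' ∂μ)}
      ≤ exp (-t * (ε + M)) * mgf (∑ i, Y i) μ t := by
        rw [hevent]
        exact measure_ge_le_exp_mul_mgf _ ht (hind.integrable_exp_mul_sum hY fun i _ => hint i)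
    _ ≤ exp (-t * (ε + M)) * exp (t * M + Fintype.card ι * c) := by gcongr
    _ = exp (Fintype.card ι * c - t * ε) := by rw [← exp_add]; ring_nf

lemma measureReal_sum_integral_sub_ge_le_of_mgf_le {Y : ι → Ω → ℝ}
    (hY : ∀ i, Measurable (Y i)) (hind : iIndepFun Y μ) {c t : ℝ} (ht : 0 ≤ t)
    (hint : ∀ i, Integrable (fun ω => exp (-t * Y i ω)) μ)
    (hmgf : ∀ i, mgf (Y i) μ (-t) ≤ exp (-t * ∫ ω, Y i ω ∂μ + c)) (ε : ℝ) :
    μ.real {ω | ε ≤ ∑ i, (∫ ω', Y i ω' ∂μ - Y i ω)} ≤ exp (Fintype.card ι * c - t * ε) := by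
  have := measureReal_sum_sub_integral_ge_le_of_mgf_le (Y := fun i ω => -Y i ω) (c := c)
    (fun i => (hY i).neg) (hind.comp (fun _ x => -x) fun _ => measurable_neg) ht
    (fun i => by simpa using hint i)
    (fun i => by
      rw [integral_neg]
      exact mgf_neg.trans_le ((hmgf i).trans_eq (by ring_nf))) ε
  simpa only [integral_neg, neg_sub_neg] using this

theorem measureReal_abs_sum_sub_integral_ge_le [Nonempty ι] {Z : ι → Ω → ℝ}
    (hZ : ∀ i, Measurable (Z i)) (hind : iIndepFun Z μ) (hZ₀ : ∀ i, 0 ≤ Z i) (hK : 0 < K)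
    (hZK : ∀ i, ∫⁻ ω, ENNReal.ofReal (exp (Z i ω / K)) ∂μ ≤ 2) {ε : ℝ} (hε : 0 ≤ ε) :
    μ.real {ω | ε ≤ |∑ i, (Z i ω - ∫ ω', Z i ω' ∂μ)|}
      ≤ 2 * exp (-bernsteinRate (Fintype.card ι) K ε) := by
  obtain ⟨t, ht₀, htK, hexponent⟩ :=
    exists_mul_sq_sub_mul_le_neg_bernsteinRate (Nat.cast_pos.2 (Fintype.card_pos (α := ι))) hK hε
  have hnegK : -t * K ≤ 1 := by nlinarith
  have hupper := measureReal_sum_sub_integral_ge_le_of_mgf_le hZ hind ht₀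
    (fun i => integrable_exp_mul_of_lintegral_le (hZ i) (hZ₀ i) hK (hZK i) htK)
    (fun i => mgf_le_exp_mul_integral_add_sq (hZ i) (hZ₀ i) hK (hZK i) htK) ε
  have hlower := measureReal_sum_integral_sub_ge_le_of_mgf_le hZ hind ht₀
    (fun i => integrable_exp_mul_of_lintegral_le (hZ i) (hZ₀ i) hK (hZK i) hnegK)
    (fun i => by
      simpa only [neg_mul, neg_sq] using
        mgf_le_exp_mul_integral_add_sq (hZ i) (hZ₀ i) hK (hZK i) hnegK) ε
  have hevent : {ω | ε ≤ |∑ i, (Z i ω - ∫ ω', Z i ω' ∂μ)|}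
      ⊆ {ω | ε ≤ ∑ i, (Z i ω - ∫ ω', Z i ω' ∂μ)} ∪ {ω | ε ≤ ∑ i, (∫ ω', Z i ω' ∂μ - Z i ω)} := by
    intro ω hω
    rcases le_abs'.1 (show ε ≤ |_| from hω) with h | h
    · right
      simpa only [Set.mem_ofPred_eq, ← neg_sub (Z _ ω), Finset.sum_neg_distrib] using
        le_neg_of_le_neg h
    · exact Or.inl h
  calc μ.real {ω | ε ≤ |∑ i, (Z i ω - ∫ ω', Z i ω' ∂μ)|}
      ≤ 2 * exp (Fintype.card ι * (t * K) ^ 2 - t * ε) := by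
        rw [two_mul]
        exact (measureReal_mono hevent).trans
          ((measureReal_union_le _ _).trans (add_le_add hupper hlower))
    _ ≤ 2 * exp (-bernsteinRate (Fintype.card ι) K ε) := by gcongr

end SubExponential

lemma sum_sq_eq_dotProduct {κ : Type*} [Fintype κ] (a : κ → ℝ) : ∑ j, a j ^ 2 = a ⬝ᵥ a := by
  simp only [dotProduct, sq]

lemma exists_sq_dotProduct_sub_sq_dotProduct_eq {κ : Type*} [Fintype κ] [DecidableEq κ]
    {k l : κ} (hkl : k ≠ l) :
    ∃ a b : κ → ℝ, ∑ j, a j ^ 2 ≤ 1 ∧ ∑ j, b j ^ 2 ≤ 1 ∧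
      ∀ v : κ → ℝ, (a ⬝ᵥ v) ^ 2 - (b ⬝ᵥ v) ^ 2 = 2 * (v k * v l) := by
  set c := (√2)⁻¹
  have hc : c ^ 2 = 1 / 2 := by simp [c, inv_pow]
  refine ⟨Pi.single k c + Pi.single l c, Pi.single k c - Pi.single l c, ?_, ?_, fun v => ?_⟩
  · rw [sum_sq_eq_dotProduct]
    simp only [add_dotProduct, single_dotProduct, Pi.add_apply,
      Pi.single_eq_same, Pi.single_eq_of_ne hkl, Pi.single_eq_of_ne hkl.symm]
    nlinarith
  · rw [sum_sq_eq_dotProduct]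
    simp only [sub_dotProduct, single_dotProduct, Pi.sub_apply,
      Pi.single_eq_same, Pi.single_eq_of_ne hkl, Pi.single_eq_of_ne hkl.symm]
    nlinarith
  · simp only [add_dotProduct, sub_dotProduct, single_dotProduct]
    linear_combination (4 * v k * v l) * hc

lemma le_abs_one_div_mul_sum_sub_iff {ι : Type*} [Fintype ι] [Nonempty ι] (x : ι → ℝ)
    (c δ : ℝ) :
    δ ≤ |(1 / Fintype.card ι : ℝ) * ∑ i, x i - c| ↔ Fintype.card ι * δ ≤ |∑ i, (x i - c)| := by
  have hn : (0 : ℝ) < Fintype.card ι := Nat.cast_pos.2 Fintype.card_pos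
  rw [Finset.sum_sub_distrib, Finset.sum_const, Finset.card_univ, nsmul_eq_mul,
    show (1 / Fintype.card ι : ℝ) * ∑ i, x i - c = (∑ i, x i - Fintype.card ι * c) / Fintype.card ι
      by field_simp, abs_div, abs_of_pos hn, le_div_iff₀' hn]

lemma le_abs_or_le_abs_of_two_mul_le_abs_sub {x y ε : ℝ} (h : 2 * ε ≤ |x - y|) :
    ε ≤ |x| ∨ ε ≤ |y| := by
  by_contra! hlt
  linarith [abs_sub x y]

def SubGaussianVector {Ω κ : Type*} [MeasurableSpace Ω] [Fintype κ] (μ : Measure Ω)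
    (Y : Ω → κ → ℝ) (L : ℝ) : Prop :=
  ∀ a : κ → ℝ, ∑ k, a k ^ 2 ≤ 1 →
    ∫⁻ ω, ENNReal.ofReal (exp (((∑ k, a k * Y ω k) / L) ^ 2)) ∂μ ≤ 2

section Covariance

variable {Ω ι κ : Type*} [MeasurableSpace Ω] {μ : Measure Ω} [Fintype ι] [Fintype κ]
  {X : ι → Ω → κ → ℝ} {L : ℝ}

lemma SubGaussianVector.lintegral_exp_sq_dotProduct_div_le {Y : Ω → κ → ℝ}
    (hY : SubGaussianVector μ Y L) {a : κ → ℝ} (ha : ∑ k, a k ^ 2 ≤ 1) :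
    ∫⁻ ω, ENNReal.ofReal (exp ((a ⬝ᵥ Y ω) ^ 2 / L ^ 2)) ∂μ ≤ 2 := by
  simpa only [div_pow, dotProduct] using hY a ha

lemma SubGaussianVector.integrable_sq_dotProduct {Y : Ω → κ → ℝ} (hYm : Measurable Y)
    (hY : SubGaussianVector μ Y L) (hL : 0 < L) {a : κ → ℝ} (ha : ∑ k, a k ^ 2 ≤ 1) :
    Integrable (fun ω => (a ⬝ᵥ Y ω) ^ 2) μ :=
  integrable_of_lintegral_exp_div_le (by fun_prop) (fun ω => sq_nonneg _) (by positivity)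
    (hY.lintegral_exp_sq_dotProduct_div_le ha)

variable [IsProbabilityMeasure μ] [Nonempty ι]

lemma measureReal_abs_sum_sq_dotProduct_sub_integral_ge_le (hX : ∀ i, Measurable (X i))
    (hind : iIndepFun X μ) (hL : 0 < L) (hsub : ∀ i, SubGaussianVector μ (X i) L)
    {a : κ → ℝ} (ha : ∑ k, a k ^ 2 ≤ 1) {ε : ℝ} (hε : 0 ≤ ε) :
    μ.real {ω | ε ≤ |∑ i, ((a ⬝ᵥ X i ω) ^ 2 - ∫ ω', (a ⬝ᵥ X i ω') ^ 2 ∂μ)|}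
      ≤ 2 * exp (-bernsteinRate (Fintype.card ι) (L ^ 2) ε) :=
  measureReal_abs_sum_sub_integral_ge_le (Z := fun i ω => (a ⬝ᵥ X i ω) ^ 2)
    (fun i => by fun_prop) (hind.comp (fun _ v => (a ⬝ᵥ v) ^ 2) fun _ => by fun_prop)
    (fun i ω => sq_nonneg _) (by positivity)
    (fun i => (hsub i).lintegral_exp_sq_dotProduct_div_le ha) hε

lemma measureReal_abs_sum_mul_sub_ge_le [DecidableEq κ] (hX : ∀ i, Measurable (X i))
    (hind : iIndepFun X μ) (hL : 0 < L) (hsub : ∀ i, SubGaussianVector μ (X i) L)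
    {S : κ → κ → ℝ} (hS : ∀ i k l, S k l = ∫ ω, X i ω k * X i ω l ∂μ) {ε : ℝ} (hε : 0 ≤ ε)
    (k l : κ) :
    μ.real {ω | ε ≤ |∑ i, (X i ω k * X i ω l - S k l)|}
      ≤ 4 * exp (-bernsteinRate (Fintype.card ι) (L ^ 2) ε) := by
  set B := exp (-bernsteinRate (Fintype.card ι) (L ^ 2) ε)
  have hdir : ∀ a : κ → ℝ, ∑ j, a j ^ 2 ≤ 1 →
      μ.real {ω | ε ≤ |∑ i, ((a ⬝ᵥ X i ω) ^ 2 - ∫ ω', (a ⬝ᵥ X i ω') ^ 2 ∂μ)|} ≤ 2 * B :=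
    fun a ha => measureReal_abs_sum_sq_dotProduct_sub_integral_ge_le hX hind hL hsub ha hε
  rcases eq_or_ne k l with rfl | hkl
  · have hsq : ∀ v : κ → ℝ, (Pi.single k 1 ⬝ᵥ v) ^ 2 = v k * v k := by
      simp [single_dotProduct, sq]
    have hunit : ∑ j, (Pi.single k (1 : ℝ) : κ → ℝ) j ^ 2 ≤ 1 := by
      simp [sum_sq_eq_dotProduct]
    calc μ.real {ω | ε ≤ |∑ i, (X i ω k * X i ω k - S k k)|}
        ≤ 2 * B := by simpa only [hsq, ← hS] using hdir _ hunit
      _ ≤ 4 * B := by linarith [exp_pos (-bernsteinRate (Fintype.card ι) (L ^ 2) ε)]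
  obtain ⟨a, b, ha, hb, hpol⟩ := exists_sq_dotProduct_sub_sq_dotProduct_eq hkl
  have hmean : ∀ i, ∫ ω, (a ⬝ᵥ X i ω) ^ 2 ∂μ - ∫ ω, (b ⬝ᵥ X i ω) ^ 2 ∂μ = 2 * S k l := by
    intro i
    rw [← integral_sub ((hsub i).integrable_sq_dotProduct (hX i) hL ha)
      ((hsub i).integrable_sq_dotProduct (hX i) hL hb)]
    simp_rw [hpol]
    rw [integral_const_mul, hS i]
  have hevent : {ω | ε ≤ |∑ i, (X i ω k * X i ω l - S k l)|}
      ⊆ {ω | ε ≤ |∑ i, ((a ⬝ᵥ X i ω) ^ 2 - ∫ ω', (a ⬝ᵥ X i ω') ^ 2 ∂μ)|}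
        ∪ {ω | ε ≤ |∑ i, ((b ⬝ᵥ X i ω) ^ 2 - ∫ ω', (b ⬝ᵥ X i ω') ^ 2 ∂μ)|} := by
    intro ω hω
    have htwice : 2 * ∑ i, (X i ω k * X i ω l - S k l)
        = ∑ i, ((a ⬝ᵥ X i ω) ^ 2 - ∫ ω', (a ⬝ᵥ X i ω') ^ 2 ∂μ)
          - ∑ i, ((b ⬝ᵥ X i ω) ^ 2 - ∫ ω', (b ⬝ᵥ X i ω') ^ 2 ∂μ) := by
      rw [Finset.mul_sum, ← Finset.sum_sub_distrib]
      refine Finset.sum_congr rfl fun i _ => ?_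
      linarith [hpol (X i ω), hmean i]
    refine le_abs_or_le_abs_of_two_mul_le_abs_sub ?_
    rw [← htwice, abs_mul, abs_two]
    exact mul_le_mul_of_nonneg_left hω zero_le_two
  calc μ.real {ω | ε ≤ |∑ i, (X i ω k * X i ω l - S k l)|}
      ≤ 2 * B + 2 * B := (measureReal_mono hevent).trans
        ((measureReal_union_le _ _).trans (add_le_add (hdir a ha) (hdir b hb)))
    _ = 4 * B := by ring

lemma measureReal_exists_abs_one_div_mul_sum_mul_sub_ge_le [DecidableEq κ]
    (hX : ∀ i, Measurable (X i)) (hind : iIndepFun X μ) (hL : 0 < L)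
    (hsub : ∀ i, SubGaussianVector μ (X i) L) {S : κ → κ → ℝ}
    (hS : ∀ i k l, S k l = ∫ ω, X i ω k * X i ω l ∂μ) {δ : ℝ} (hδ : 0 ≤ δ) :
    μ.real {ω | ∃ k l, δ ≤ |(1 / Fintype.card ι : ℝ) * ∑ i, X i ω k * X i ω l - S k l|}
      ≤ Fintype.card κ ^ 2 *
        (4 * exp (-bernsteinRate (Fintype.card ι) (L ^ 2) (Fintype.card ι * δ))) := by
  have hevent : {ω | ∃ k l, δ ≤ |(1 / Fintype.card ι : ℝ) * ∑ i, X i ω k * X i ω l - S k l|}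
      = ⋃ k, ⋃ l, {ω | Fintype.card ι * δ ≤ |∑ i, (X i ω k * X i ω l - S k l)|} := by
    ext ω
    simp only [Set.mem_ofPred_eq, Set.mem_iUnion, le_abs_one_div_mul_sum_sub_iff]
  rw [hevent]
  calc _ ≤ ∑ k, ∑ l, μ.real {ω | Fintype.card ι * δ ≤ |∑ i, (X i ω k * X i ω l - S k l)|} :=
        (measureReal_iUnion_fintype_le _).trans
          (Finset.sum_le_sum fun k _ => measureReal_iUnion_fintype_le _)
    _ ≤ ∑ _k : κ, ∑ _l : κ,
          4 * exp (-bernsteinRate (Fintype.card ι) (L ^ 2) (Fintype.card ι * δ)) := by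
        gcongr with k _ l _
        exact measureReal_abs_sum_mul_sub_ge_le hX hind hL hsub hS (by positivity) k l
    _ = _ := by
        simp only [Finset.sum_const, Finset.card_univ, nsmul_eq_mul]
        ring

end Covariance

lemma sq_mul_four_mul_exp_neg_le (x χ : ℝ) :
    x ^ 2 * (4 * exp (-(2 * log x + χ + log 2))) ≤ 2 * exp (-χ) := by
  have hx : x ^ 2 * exp (-(2 * log x)) ≤ 1 := by
    rcases eq_or_ne x 0 with rfl | hx
    · simp
    rw [show 2 * log x = log (x ^ 2) by rw [log_pow]; norm_num, exp_neg, exp_log (by positivity),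
      mul_inv_cancel₀ (by positivity)]
  calc x ^ 2 * (4 * exp (-(2 * log x + χ + log 2)))
      = 2 * exp (-χ) * (x ^ 2 * exp (-(2 * log x))) := by
        rw [show -(2 * log x + χ + log 2) = -(2 * log x) + -χ + -log 2 by ring, exp_add, exp_add,
          exp_neg (log 2), exp_log two_pos]
        ring
    _ ≤ 2 * exp (-χ) := mul_le_of_le_one_right (by positivity) hx

theorem empirical_covariance_concentration_general {Ω : Type*} [MeasurableSpace Ω]
    (μ : Measure Ω) [IsProbabilityMeasure μ]
    (p s : ℕ) (hs : 0 < s) (X : Fin s → Ω → Fin p → ℝ)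
    (hmeas : ∀ i, Measurable (X i))
    (hindep : iIndepFun X μ)
    (L : ℝ) (hL : 0 < L)
    (hsub : ∀ i, ∀ a : Fin p → ℝ, (∑ k, a k ^ 2) ≤ 1 →
      ∫⁻ ω, ENNReal.ofReal (Real.exp (((∑ k, a k * X i ω k) / L) ^ 2)) ∂μ ≤ 2)
    (Sstar : Fin p → Fin p → ℝ)
    (hSstar : ∀ i k l, Sstar k l = ∫ ω, X i ω k * X i ω l ∂μ)
    (χ : ℝ) :
    (μ {ω | ∃ k l,
        2 * L ^ 2 * ((2 * Real.log p + χ) / s + Real.sqrt ((4 * Real.log p + 2 * χ) / s))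
          ≤ |(1 / s : ℝ) * ∑ i, X i ω k * X i ω l - Sstar k l|}).toReal
      ≤ 2 * Real.exp (-χ) := by
  rw [← measureReal_def]
  rcases le_or_gt χ (log 2) with hχ | hχ
  · refine measureReal_le_one.trans ?_
    have := exp_le_exp.2 (neg_le_neg hχ)
    rw [exp_neg, exp_log two_pos] at this
    linarith
  have : Nonempty (Fin s) := ⟨⟨0, hs⟩⟩
  set u := 2 * log p + χ
  have hu : log 2 ≤ u := by linarith [log_natCast_nonneg p]
  have hδ : 0 ≤ 2 * L ^ 2 * (u / s + √(2 * u / s)) := by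
    have := (log_pos one_lt_two).trans_le hu
    positivity
  rw [show 4 * log p + 2 * χ = 2 * u by ring]
  set δ := 2 * L ^ 2 * (u / s + √(2 * u / s))
  calc _ ≤ (p : ℝ) ^ 2 * (4 * exp (-bernsteinRate s (L ^ 2) (s * δ))) := by
        simpa only [Fintype.card_fin] using measureReal_exists_abs_one_div_mul_sum_mul_sub_ge_le
          hmeas hindep hL (fun i => hsub i) hSstar hδ
    _ ≤ (p : ℝ) ^ 2 * (4 * exp (-(u + log 2))) := by
        gcongr
        exact add_log_two_le_bernsteinRate (by exact_mod_cast hs) (by positivity) hu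
    _ ≤ 2 * exp (-χ) := sq_mul_four_mul_exp_neg_le _ _

/-- Let X₁, …, X_s be i.i.d. random vectors in ℝ^p satisfying the sub-Gaussian vector
condition with constant L > 0, and let Σ* = E[X₁X₁ᵀ]. Then for every χ > 0, with
δ_s(χ) = 2L²((2·log p + χ)/s + √((4·log p + 2χ)/s)),
P(max_{k,l} |(1/s)·Σᵢ X_{i,k}X_{i,l} − Σ*_{kl}| ≥ δ_s(χ)) ≤ 2e^{−χ}. -/
theorem empirical_covariance_concentration {Ω : Type*} [MeasurableSpace Ω]
    (μ : Measure Ω) [IsProbabilityMeasure μ]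
    (p s : ℕ) (hs : 0 < s) (X : Fin s → Ω → Fin p → ℝ)
    (hmeas : ∀ i, Measurable (X i))
    (hindep : iIndepFun X μ)
    (hident : ∀ i j, μ.map (X i) = μ.map (X j))
    (L : ℝ) (hL : 0 < L)
    (hsub : ∀ i, ∀ a : Fin p → ℝ, (∑ k, a k ^ 2) ≤ 1 →
      ∫⁻ ω, ENNReal.ofReal (Real.exp (((∑ k, a k * X i ω k) / L) ^ 2)) ∂μ ≤ 2)
    (Sstar : Fin p → Fin p → ℝ)
    (hSstar : ∀ i k l, Sstar k l = ∫ ω, X i ω k * X i ω l ∂μ)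
    (χ : ℝ) (hχ : 0 < χ) :
    (μ {ω | ∃ k l,
        2 * L ^ 2 * ((2 * Real.log p + χ) / s + Real.sqrt ((4 * Real.log p + 2 * χ) / s))
          ≤ |(1 / s : ℝ) * ∑ i, X i ω k * X i ω l - Sstar k l|}).toReal
      ≤ 2 * Real.exp (-χ) :=
  empirical_covariance_concentration_general μ p s hs X hmeas hindep L hL hsub Sstar hSstar χ
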